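/- arXiv:2306.15061 — 4 statements merged into one kernel-verified Lean document; each statement's English description precedes it below -/
import Mathlib

section
/- If M is a rank-r simple matroid with no U_{2,ℓ+2}-minor for some ℓ ≥ 2, then M has fewer than ℓ^r elements. -/
open Set Matroid

namespace Paper

variable {α : Type*}

/-- `a` and `b` are parallel (possibly equal) nonloops of `M`. -/
def Para (M : Matroid α) (a b : α) : Prop :=
  M.Indep {a} ∧ M.Indep {b} ∧ b ∈ M.closure {a}

/-- The rank of a matroid. -/
noncomputable def rk (M : Matroid α) : ℕ :=
  sSup {n | ∃ I, M.Indep I ∧ I.ncard = n}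

/-- `C` is a circuit of `M`: a minimal dependent set. -/
def IsCircuit (M : Matroid α) (C : Set α) : Prop :=
  M.Dep C ∧ ∀ D ⊂ C, ¬ M.Dep D

/-- A matroid is simple if every subset of size at most two is independent. -/
def Simple (M : Matroid α) : Prop :=
  ∀ X ⊆ M.E, X.Finite → X.ncard ≤ 2 → M.Indep X

/-- The number of points (parallel classes of nonloops) of `M`. -/
noncomputable def eps (M : Matroid α) : ℕ :=
  {P : Set α | ∃ a, M.Indep {a} ∧ P = {b | Para M a b}}.ncard

/-- Contraction of the set `C` from `M`, defined by duality. -/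
noncomputable def contract (M : Matroid α) (C : Set α) : Matroid α :=
  (M✶ ↾ (M.E \ C))✶

/-- `N` is a minor of `M`: obtained by contracting a set `C` (with basis `I`) and
deleting some further elements. -/
def IsMinor (N M : Matroid α) : Prop :=
  ∃ C I, C ⊆ M.E ∧ M.IsBasis I C ∧ N.E ⊆ M.E \ C ∧
    ∀ X ⊆ N.E, (N.Indep X ↔ M.Indep (X ∪ I))

/-- `M` has a minor isomorphic to the rank-2 uniform matroid `U_{2,k}`. -/
def HasUnifMinor (M : Matroid α) (k : ℕ) : Prop :=
  ∃ N, IsMinor N M ∧ N.E.Finite ∧ N.E.ncard = k ∧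
    ∀ X ⊆ N.E, (N.Indep X ↔ X.ncard ≤ 2)

/-- `M` has a restriction isomorphic to `U_{2,k}`. -/
def HasUnifRestriction (M : Matroid α) (k : ℕ) : Prop :=
  ∃ X ⊆ M.E, X.Finite ∧ X.ncard = k ∧ ∀ Y ⊆ X, (M.Indep Y ↔ Y.ncard ≤ 2)

/-- `C` is the edge set of a cycle of the simple graph `G`. -/
def GraphicCircuit {V : Type*} (G : SimpleGraph V) (C : Set (Sym2 V)) : Prop :=
  ∃ (v : V) (w : G.Walk v v), w.IsCycle ∧ C = {e | e ∈ w.edges}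

/-- `N` is isomorphic to the cycle matroid of the simple graph `G`. -/
def IsGraphicIso {V : Type*} (N : Matroid α) (G : SimpleGraph V) : Prop :=
  ∃ f : α → Sym2 V, InjOn f N.E ∧ f '' N.E = G.edgeSet ∧
    ∀ C ⊆ N.E, (IsCircuit N C ↔ GraphicCircuit G (f '' C))

/-- `M` has a minor isomorphic to the cycle matroid `M(K_t)`. -/
def HasCliqueMinor (M : Matroid α) (t : ℕ) : Prop :=
  ∃ N, IsMinor N M ∧ IsGraphicIso N (SimpleGraph.completeGraph (Fin t))

/-- A simple graph has a `K_t`-minor, via branch sets. -/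
def HasGraphCliqueMinor {V : Type*} (G : SimpleGraph V) (t : ℕ) : Prop :=
  ∃ f : V → Option (Fin t),
    (∀ i : Fin t, (G.induce {v | f v = some i}).Connected) ∧
    ∀ i j : Fin t, i ≠ j → ∃ u v, f u = some i ∧ f v = some j ∧ G.Adj u v

/-- The extremal density threshold `d(t)` for `K_t`-minors. -/
noncomputable def dthr (t : ℕ) : ℝ :=
  sInf {c : ℝ | ∀ (n : ℕ) (G : SimpleGraph (Fin n)),
    (G.edgeSet.ncard : ℝ) > c * n → HasGraphCliqueMinor G t}

/-- A multigraph: loops and parallel edges allowed. -/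
structure Multigraph (V : Type*) (E : Type*) where
  ends : E → Sym2 V

/-- A cycle in a multigraph: distinct vertices `v_0, …, v_n` and distinct edges
`e_0, …, e_n` with `e_i` joining `v_i` and `v_{i+1}` (cyclically).  The case `n = 0`
is a loop and `n = 1` a pair of parallel edges. -/
structure Cycle {V E : Type*} (G : Multigraph V E) where
  n : ℕ
  vtx : Fin (n+1) → V
  edge : Fin (n+1) → E
  vtx_inj : Function.Injective vtx
  edge_inj : Function.Injective edge
  ends_eq : ∀ i, G.ends (edge i) = s(vtx i, vtx (i+1))

/-- `C` is the edge set of a cycle of `G`. -/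
def IsCycleSet {V E : Type*} (G : Multigraph V E) (C : Set E) : Prop :=
  ∃ c : Cycle G, Set.range c.edge = C

/-- The edge set `X` induces a connected subgraph. -/
def EdgeConn {V E : Type*} (G : Multigraph V E) (X : Set E) : Prop :=
  X.Nonempty ∧ ∀ e ∈ X, ∀ f ∈ X,
    Relation.ReflTransGen (fun a b => a ∈ X ∧ b ∈ X ∧ ∃ v, v ∈ G.ends a ∧ v ∈ G.ends b) e f

/-- `X` contains (the edge sets of) at least two distinct cycles. -/
def TwoCycles {V E : Type*} (G : Multigraph V E) (X : Set E) : Prop :=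
  ∃ C₁ C₂, C₁ ⊆ X ∧ C₂ ⊆ X ∧ IsCycleSet G C₁ ∧ IsCycleSet G C₂ ∧ C₁ ≠ C₂

/-- `X` is the edge set of a minimal connected subgraph containing more than one
cycle; these are precisely the thetas and handcuffs of `G`. -/
def MinConnTwo {V E : Type*} (G : Multigraph V E) (X : Set E) : Prop :=
  EdgeConn G X ∧ TwoCycles G X ∧ ∀ Y ⊂ X, ¬ (EdgeConn G Y ∧ TwoCycles G Y)

/-- `X` is the edge set of a theta subgraph: a minimal connected subgraph with more
than one cycle that contains exactly three cycles. -/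
def IsTheta {V E : Type*} (G : Multigraph V E) (X : Set E) : Prop :=
  MinConnTwo G X ∧ {C | IsCycleSet G C ∧ C ⊆ X}.ncard = 3

/-- `(G, B)` is a biased graph: `B` is a set of cycles such that no theta contains
exactly two balanced cycles. -/
def IsBiased {V E : Type*} (G : Multigraph V E) (B : Set (Set E)) : Prop :=
  (∀ C ∈ B, IsCycleSet G C) ∧
  ∀ X, IsTheta G X → {C | C ⊆ X ∧ IsCycleSet G C ∧ C ∈ B}.ncard ≠ 2

/-- The circuits of the frame matroid `FM(G,B)`: balanced cycles, together with
thetas and handcuffs containing no balanced cycle. -/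
def FrameCircuit {V E : Type*} (G : Multigraph V E) (B : Set (Set E)) (C : Set E) : Prop :=
  (IsCycleSet G C ∧ C ∈ B) ∨ (MinConnTwo G C ∧ ∀ D ⊆ C, IsCycleSet G D → D ∉ B)

/-- `M` is the frame matroid `FM(G,B)` of the biased graph `(G,B)`: its ground set is
`E(G)` and its circuits are exactly the frame circuits. -/
def IsFM {V E : Type*} (G : Multigraph V E) (B : Set (Set E)) (M : Matroid E) : Prop :=
  M.E = univ ∧ ∀ C, IsCircuit M C ↔ FrameCircuit G B C

/-- Connectedness of a multigraph. -/
def MGConnected {V E : Type*} (G : Multigraph V E) : Prop :=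
  Nonempty V ∧ ∀ u v : V, Relation.ReflTransGen (fun a b => ∃ e, G.ends e = s(a,b)) u v

/-- `M` is framed by `B`: `B` is a base and every element is spanned by at most two
elements of `B`. -/
def IsFramed (M : Matroid α) (B : Set α) : Prop :=
  M.IsBase B ∧ ∀ e ∈ M.E, ∃ S ⊆ B, S.Finite ∧ S.ncard ≤ 2 ∧ e ∈ M.closure S

/-- A frame matroid: a restriction of a matroid framed by some set. -/
def IsFrameMatroid (M : Matroid α) : Prop :=
  ∃ (M' : Matroid α) (B R : Set α), IsFramed M' B ∧ R ⊆ M'.E ∧ M = M' ↾ R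

/-- A `B`-clique: a matroid framed by `B` in which every pair of elements of `B` lies
in a common triangle. -/
def IsBClique (M : Matroid α) (B : Set α) : Prop :=
  IsFramed M B ∧ ∀ a ∈ B, ∀ b ∈ B, a ≠ b →
    ∃ T, IsCircuit M T ∧ T.ncard = 3 ∧ a ∈ T ∧ b ∈ T

/-- Gain graphs over a group `Γ`. -/
structure GainGraph (V E Γ : Type*) [Group Γ] where
  src : E → V
  tgt : E → V
  gain : E → Γ

/-- The underlying multigraph of a gain graph. -/
def GainGraph.toMultigraph {V E Γ : Type*} [Group Γ] (G : GainGraph V E Γ) :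
    Multigraph V E :=
  ⟨fun e => s(G.src e, G.tgt e)⟩

open scoped Classical in
/-- `C` is the edge set of a balanced cycle of the gain graph `G`: the ordered product
of the gains (inverted when the edge is traversed against its direction) is `1`. -/
def GainGraph.BalancedSet {V E Γ : Type*} [Group Γ] (G : GainGraph V E Γ)
    (C : Set E) : Prop :=
  ∃ c : Cycle G.toMultigraph, Set.range c.edge = C ∧
    (List.ofFn (fun i => if G.src (c.edge i) = c.vtx i then G.gain (c.edge i)
      else (G.gain (c.edge i))⁻¹)).prod = 1

/-- `n`-towers in a matroid, indexed by the nonempty subsets of `[n] = {1, …, n}`. -/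
def IsTower (M : Matroid α) : ℕ → (Finset ℕ → α) → Prop
  | 0, _ => False
  | 1, e => M.Indep {e {1}}
  | n+2, e =>
    (∀ X : Finset ℕ, X.Nonempty → X ⊆ Finset.Icc 1 (n+1) →
       Para (contract M {e {n+2}}) (e X) (e (insert (n+2) X))) ∧
    (∃ X : Finset ℕ, X.Nonempty ∧ X ⊆ Finset.Icc 1 (n+1) ∧
       ¬ Para M (e X) (e (insert (n+2) X))) ∧
    IsTower M (n+1) e ∧ IsTower (contract M {e {n+2}}) (n+1) e ∧
    IsTower M (n+1) (fun X => e (insert (n+2) X)) ∧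
    IsTower (contract M {e {n+2}}) (n+1) (fun X => e (insert (n+2) X))

/-- Equivalence of `n`-towers: corresponding elements are parallel. -/
def TowerEquiv (M : Matroid α) (n : ℕ) (e e' : Finset ℕ → α) : Prop :=
  ∀ X : Finset ℕ, X.Nonempty → X ⊆ Finset.Icc 1 n → Para M (e X) (e' X)

/-- `w M i` is the number of equivalence classes of `i`-towers of `M` (for `i ≥ 1`),
with `w M 0 = r(M)`. -/
noncomputable def w (M : Matroid α) (i : ℕ) : ℕ :=
  if i = 0 then rk M else
    {s : Set (Finset ℕ → α) | ∃ e, IsTower M i e ∧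
      s = {e' | IsTower M i e' ∧ TowerEquiv M i e e'}}.ncard

/-- `G` is the projective geometry matroid on the projectivization of `W`:
a set of projective points is independent iff it admits a linearly independent
choice of representatives. -/
def IsPG {F : Type*} [Field F] {W : Type*} [AddCommGroup W] [Module F W]
    (G : Matroid (Projectivization F W)) : Prop :=
  G.E = univ ∧ ∀ I : Set (Projectivization F W),
    G.Indep I ↔ Projectivization.Independent (fun x : I => x.1)



/-! Induction on the rank. Fix an element `e`. The lines through `e` are the points of the
simplification of `M ／ e`, a simple minor of rank at most `r - 1`, so by induction there are
fewer than `ℓ ^ (r - 1)` of them. A line with `ℓ + 2` points would be a `U_{2,ℓ+2}`-restriction,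
so each line through `e` has at most `ℓ` points besides `e`, and
`|E| ≤ 1 + ℓ (ℓ ^ (r - 1) - 1) < ℓ ^ r`. For the induction the excluded minor is carried as
"no minor has a `U_{2,ℓ+2}`-restriction", which is inherited by minors. -/

variable {M N : Matroid α} {I X : Set α} {e : α} {k ℓ : ℕ}

lemma ncard_le_rk (hfin : M.E.Finite) (hI : M.Indep I) : I.ncard ≤ rk M :=
  le_csSup ⟨M.E.ncard, by rintro _ ⟨J, hJ, rfl⟩; exact ncard_le_ncard hJ.subset_ground hfin⟩
    ⟨I, hI, rfl⟩

lemma ncard_pair_le (a b : α) : ({a, b} : Set α).ncard ≤ 2 :=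
  (ncard_insert_le a {b}).trans (by simp)

lemma Simple.indep_pair (hM : Simple M) {a b : α} (ha : a ∈ M.E) (hb : b ∈ M.E) :
    M.Indep {a, b} :=
  hM _ (pair_subset ha hb) (toFinite _) (ncard_pair_le a b)

lemma simple_of_forall_indep_pair (h : ∀ a ∈ M.E, ∀ b ∈ M.E, M.Indep {a, b}) : Simple M := by
  intro X hX hXfin hX2
  interval_cases hXn : X.ncard
  · simp [(ncard_eq_zero hXfin).mp hXn]
  · obtain ⟨a, rfl⟩ := ncard_eq_one.mp hXn
    simpa using h a (hX rfl) a (hX rfl)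
  · obtain ⟨a, b, -, rfl⟩ := ncard_eq_two.mp hXn
    exact h a (hX (mem_insert a _)) b (hX (mem_insert_of_mem a rfl))

lemma Indep.ncard_le_of_subset_closure (hI : M.Indep I) (hIX : I ⊆ M.closure X)
    (hX : X.Finite) : I.ncard ≤ X.ncard := by
  have hle : I.encard ≤ X.encard := calc
    I.encard ≤ M.eRk (M.closure X) := hI.encard_le_eRk_of_subset hIX
    _ = M.eRk X := M.eRk_closure_eq X
    _ ≤ X.encard := M.eRk_le_encard X
  have hIfin : I.Finite := finite_of_encard_le_coe (hle.trans_eq hX.cast_ncard_eq.symm)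
  rwa [← hIfin.cast_ncard_eq, ← hX.cast_ncard_eq, Nat.cast_le] at hle

lemma exists_simplification (hfin : M.E.Finite) :
    ∃ S ⊆ M.E, Simple (M ↾ S) ∧ ∀ f, M.IsNonloop f → ∃ s ∈ S, f ∈ M.closure {s} := by
  set P := {S | S ⊆ M.E ∧ ∀ a ∈ S, ∀ b ∈ S, M.Indep {a, b}}
  have hPfin : P.Finite := hfin.finite_subsets.subset fun S hS => hS.1
  obtain ⟨S, ⟨hSE, hSpair⟩, hSmax⟩ := hPfin.exists_maximal ⟨∅, empty_subset _, by simp⟩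
  refine ⟨S, hSE, simple_of_forall_indep_pair fun a ha b hb => ?_, fun f hf => ?_⟩
  · exact restrict_indep_iff.mpr ⟨hSpair a ha b hb, pair_subset ha hb⟩
  by_contra! hfS
  have hins : insert f S ∈ P := by
    refine ⟨insert_subset hf.mem_ground hSE, ?_⟩
    have hfs : ∀ s ∈ S, M.Indep {f, s} := fun s hs =>
      (indep_singleton.mp (by simpa using hSpair s hs s hs)).indep.insert_indep_iff.mpr
        (Or.inl ⟨hf.mem_ground, hfS s hs⟩)
    rintro a (rfl | ha) b (rfl | hb)
    · simpa using hf.indep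
    · exact hfs b hb
    · exact pair_comm b a ▸ hfs a ha
    · exact hSpair a ha b hb
  exact hfS f (hSmax hins (subset_insert f S) (mem_insert f S))
    (M.mem_closure_of_mem rfl (singleton_subset_iff.mpr hf.mem_ground))

lemma hasUnifMinor_of_isMinor (hNM : N ≤m M) (hN : HasUnifRestriction N k) :
    HasUnifMinor M k := by
  obtain ⟨Y, hYN, hYfin, hYk, hY⟩ := hN
  obtain ⟨C, D, hCE, -, -, rfl⟩ := hNM.exists_eq_contract_delete_disjoint
  obtain ⟨I, hI⟩ := M.exists_isBasis C hCE
  have hYE : Y ⊆ M.E \ C := hYN.trans sdiff_subset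
  refine ⟨M ／ C ＼ D ↾ Y, ⟨C, I, hCE, hI, hYE, fun Z hZ => ?_⟩, hYfin, hYk, fun Z hZ => ?_⟩
  · have hZY : Z ⊆ Y := hZ
    rw [restrict_indep_iff, delete_indep_iff,
      hI.contract_indep_iff_of_disjoint (disjoint_of_subset_right (hZY.trans hYE)
        disjoint_sdiff_right),
      and_iff_left (disjoint_of_subset_left (hZY.trans hYN) disjoint_sdiff_left), and_iff_left hZY]
  · rw [restrict_indep_iff, and_iff_left (show Z ⊆ Y from hZ)]
    exact hY Z hZ

lemma contract_restrict_isMinor (M : Matroid α) (C R : Set α) (hR : R ⊆ (M ／ C).E) :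
    M ／ C ↾ R ≤m M := by
  rw [← delete_compl hR]
  exact contract_delete_isMinor M C _

lemma ncard_inter_closure_pair_lt (hM : Simple M) (hfin : M.E.Finite)
    (hU : ¬ HasUnifRestriction M k) (a b : α) : (M.E ∩ M.closure {a, b}).ncard < k := by
  by_contra! hk
  obtain ⟨Y, hY, hYk⟩ := exists_subset_card_eq hk
  have hYE : Y ⊆ M.E := hY.trans inter_subset_left
  refine hU ⟨Y, hYE, hfin.subset hYE, hYk, fun Z hZ => ⟨fun hZ_indep => ?_, fun hZ2 =>
    hM Z (hZ.trans hYE) (hfin.subset (hZ.trans hYE)) hZ2⟩⟩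
  exact (Indep.ncard_le_of_subset_closure hZ_indep (hZ.trans (hY.trans inter_subset_right))
    (toFinite _)).trans (ncard_pair_le a b)

lemma ncard_le_one_add_mul_of_cover {E S : Set α} {L : α → Set α} (hE : E.Finite) (he : e ∈ E)
    (heL : ∀ s ∈ S, e ∈ L s) (hL : ∀ s ∈ S, (E ∩ L s).ncard ≤ ℓ + 1)
    (hcover : ∀ f ∈ E, f ≠ e → ∃ s ∈ S, f ∈ L s) (hS : S.Finite) :
    E.ncard ≤ 1 + ℓ * S.ncard := by
  set T := hS.toFinset
  have hsub : E \ {e} ⊆ ⋃ s ∈ T, (E ∩ L s) \ {e} := fun f ⟨hf, hfe⟩ => by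
    obtain ⟨s, hs, hfs⟩ := hcover f hf hfe
    exact mem_biUnion (hS.mem_toFinset.mpr hs) ⟨⟨hf, hfs⟩, hfe⟩
  have hpiece : ∀ s ∈ T, ((E ∩ L s) \ {e}).ncard ≤ ℓ := fun s hs => by
    have hs' := hS.mem_toFinset.mp hs
    rw [ncard_sdiff_singleton_of_mem (mem_inter he (heL s hs'))]
    exact Nat.sub_le_of_le_add (hL s hs')
  have hE' : (E \ {e}).ncard ≤ ℓ * S.ncard := calc
    (E \ {e}).ncard ≤ (⋃ s ∈ T, (E ∩ L s) \ {e}).ncard :=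
      ncard_le_ncard hsub (T.finite_toSet.biUnion fun s _ => (hE.inter_of_left _).sdiff)
    _ ≤ ∑ s ∈ T, ((E ∩ L s) \ {e}).ncard := T.set_ncard_biUnion_le _
    _ ≤ T.card • ℓ := Finset.sum_le_card_nsmul _ _ _ hpiece
    _ = ℓ * S.ncard := by rw [ncard_eq_toFinset_card S hS, smul_eq_mul, mul_comm]
  rw [ncard_sdiff_singleton_of_mem he] at hE'
  omega

theorem Simple.ncard_lt_pow (hM : Simple M) (hfin : M.E.Finite) (hℓ : 2 ≤ ℓ) {n : ℕ}
    (hrk : ∀ I, M.Indep I → I.ncard ≤ n)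
    (hU : ∀ N, N ≤m M → ¬ HasUnifRestriction N (ℓ + 2)) : M.E.ncard < ℓ ^ n := by
  induction n generalizing M with
  | zero =>
    suffices M.E = ∅ by simp [this]
    refine eq_empty_of_forall_notMem fun e he => ?_
    simpa using hrk {e} (by simpa using hM.indep_pair he he)
  | succ n ih =>
    obtain hE | ⟨e, he⟩ := M.E.eq_empty_or_nonempty
    · rw [hE, ncard_empty]; positivity
    have he_nonloop : M.IsNonloop e := indep_singleton.mp (by simpa using hM.indep_pair he he)
    obtain ⟨S, hSE, hS_simple, hS_cover⟩ := exists_simplification (M := M ／ {e}) hfin.sdiff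
    have hSfin : S.Finite := hfin.subset (hSE.trans sdiff_subset)
    have hS_rk : ∀ J, (M ／ {e} ↾ S).Indep J → J.ncard ≤ n := by
      intro J hJ
      rw [restrict_indep_iff, he_nonloop.contractElem_indep_iff] at hJ
      have := hrk _ hJ.1.2
      rw [ncard_insert_of_notMem hJ.1.1 (hSfin.subset hJ.2)] at this
      omega
    have hS_lt := ih hS_simple hSfin hS_rk fun N hN =>
      hU N (hN.trans (contract_restrict_isMinor M {e} S hSE))
    have hline : ∀ s ∈ S, (M.E ∩ M.closure {s, e}).ncard ≤ ℓ + 1 := fun s _ =>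
      Nat.lt_succ_iff.mp (ncard_inter_closure_pair_lt hM hfin (hU M IsMinor.refl) s e)
    have hcover : ∀ f ∈ M.E, f ≠ e → ∃ s ∈ S, f ∈ M.closure {s, e} := by
      intro f hf hfe
      have hf_nonloop : (M ／ {e}).IsNonloop f := contract_isNonloop_iff.mpr
        ((he_nonloop.indep.insert_indep_iff_of_notMem hfe).mp (hM.indep_pair hf he))
      obtain ⟨s, hs, hfs⟩ := hS_cover f hf_nonloop
      rw [contract_closure_eq, singleton_union] at hfs
      exact ⟨s, hs, hfs.1⟩
    have hcount := ncard_le_one_add_mul_of_cover (L := fun s => M.closure {s, e}) hfin he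
      (fun s hs => M.mem_closure_of_mem (mem_insert_of_mem s rfl) (pair_subset (hSE hs).1 he))
      hline hcover hSfin
    calc M.E.ncard ≤ 1 + ℓ * S.ncard := hcount
      _ < ℓ * (S.ncard + 1) := by nlinarith
      _ ≤ ℓ ^ (n + 1) := by rw [pow_succ']; exact Nat.mul_le_mul_left ℓ hS_lt

theorem statement2 {α : Type*} (ℓ r : ℕ) (hℓ : 2 ≤ ℓ) (M : Matroid α)
    (hfin : M.E.Finite) (hs : Simple M) (hr : rk M = r)
    (hU : ¬ HasUnifMinor M (ℓ + 2)) :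
    M.E.ncard < ℓ ^ r :=
  hs.ncard_lt_pow hfin hℓ (fun _ hI => hr ▸ ncard_le_rk hfin hI)
    fun _ hNM hN => hU (hasUnifMinor_of_isMinor hNM hN)

end Paper
end

section
/- Let q be a prime power and t, n ∈ ℕ with t < n − 1. If M is the (n,q,t)-crown, then |E(M)| = (n − t)·q^t + (q^t − 1)/(q − 1). -/
open Set Matroid

namespace Paper

variable {α : Type*}

/-!
The crown is the union of the `n - t` flats `cl(B₀ ∪ {e})` of rank `t + 1`. Flats spanned by
subsets of one independent set meet in the flat spanned by the intersection, so any two of these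
meet exactly in `P = cl(B₀)`. A flat of rank `k` of `PG(n - 1, q)` has `1 + q + ⋯ + q^(k-1)`
points, so each `cl(B₀ ∪ {e})` adds `q^t` points to the `(q^t - 1)/(q - 1)` points of `P`.
-/

open scoped LinearAlgebra.Projectivization

theorem _root_.Set.ncard_biUnion_of_pairwise_inter_subset {ι α : Type*} {s : Set ι}
    {A : ι → Set α} {P : Set α} {c : ℕ} (hs : s.Finite) (hne : s.Nonempty)
    (hfin : ∀ i ∈ s, (A i).Finite) (hP : ∀ i ∈ s, P ⊆ A i)
    (hinter : s.Pairwise fun i j => A i ∩ A j ⊆ P)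
    (hc : ∀ i ∈ s, (A i \ P).ncard = c) :
    (⋃ i ∈ s, A i).ncard = P.ncard + s.ncard * c := by
  obtain ⟨j, hj⟩ := hne
  have hunion : ⋃ i ∈ s, A i = P ∪ ⋃ i ∈ s, (A i \ P) := by
    ext x
    simp only [mem_union, mem_iUnion, mem_sdiff, exists_prop]
    constructor
    · rintro ⟨i, hi, hx⟩
      by_cases hxP : x ∈ P
      exacts [Or.inl hxP, Or.inr ⟨i, hi, hx, hxP⟩]
    · rintro (hx | ⟨i, hi, hx, -⟩)
      exacts [⟨j, hj, hP j hj hx⟩, ⟨i, hi, hx⟩]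
  have hdisj : s.PairwiseDisjoint fun i => A i \ P := fun i hi k hk hik =>
    disjoint_left.2 fun x hxi hxk => hxi.2 (hinter hi hk hik ⟨hxi.1, hxk.1⟩)
  have hPdisj : Disjoint P (⋃ i ∈ s, (A i \ P)) := by
    simp only [disjoint_iUnion_right]
    exact fun i _ => disjoint_sdiff_right
  rw [hunion, ncard_union_eq hPdisj ((hfin j hj).subset (hP j hj))
      (hs.biUnion fun i hi => (hfin i hi).sdiff),
    hs.ncard_biUnion (fun i hi => (hfin i hi).sdiff) hdisj, finsum_mem_congr rfl hc,
    finsum_mem_eq_finite_toFinset_sum _ hs, Finset.sum_const, smul_eq_mul,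
    ncard_eq_toFinset_card s hs]

theorem _root_.Matroid.Indep.closure_insert_inter_closure_insert {α : Type*} {M : Matroid α}
    {I : Set α} {e f : α} (h : M.Indep (insert e (insert f I))) (hef : e ≠ f) :
    M.closure (insert e I) ∩ M.closure (insert f I) = M.closure I := by
  rw [← Matroid.Indep.closure_inter_eq_inter_closure (h.subset (by grind))]
  congr 1
  grind

section PointsOfSubspace

open Projectivization Module

variable {F V : Type*} [Field F] [AddCommGroup V] [Module F V]

theorem _root_.Projectivization.setOf_rep_mem_eq_range_map (W : Submodule F V) :
    {p : ℙ F V | p.rep ∈ W} = range (Projectivization.map W.subtype W.injective_subtype) := by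
  ext p
  constructor
  · intro hp
    refine ⟨mk F ⟨p.rep, hp⟩ (by simpa using p.rep_nonzero), ?_⟩
    rw [map_mk]
    exact p.mk_rep
  · rintro ⟨x, rfl⟩
    induction x using ind with | h w hw => ?_
    rw [map_mk]
    obtain ⟨a, ha⟩ := exists_smul_eq_mk_rep F (W.subtype w) (by simpa using hw)
    rw [mem_ofPred_eq, ← ha]
    exact W.smul_of_tower_mem a w.2

theorem _root_.Projectivization.ncard_setOf_rep_mem [Finite F] (W : Submodule F V) :
    {p : ℙ F V | p.rep ∈ W}.ncard = ∑ i ∈ Finset.range (finrank F W), Nat.card F ^ i := by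
  rw [setOf_rep_mem_eq_range_map, ncard_range_of_injective (map_injective _ _),
    card_of_finrank F W rfl]

end PointsOfSubspace

section ProjectiveGeometry

open Projectivization Module Submodule

variable {F V : Type*} [Field F] [AddCommGroup V] [Module F V] {G : Matroid (ℙ F V)}
  {I : Set (ℙ F V)}

theorem IsPG.indep_iff (hG : IsPG G) : G.Indep I ↔ LinearIndepOn F Projectivization.rep I := by
  rw [hG.2, independent_iff]
  rfl

theorem IsPG.mem_closure_iff (hG : IsPG G) (hI : G.Indep I) {p : ℙ F V} :
    p ∈ G.closure I ↔ p.rep ∈ span F (Projectivization.rep '' I) := by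
  rw [hI.mem_closure_iff', hG.1]
  by_cases hp : p ∈ I
  · exact iff_of_true (by simp [hp]) (subset_span (mem_image_of_mem _ hp))
  · rw [hG.indep_iff, linearIndepOn_insert hp, ← hG.indep_iff]
    simp [hI, hp]

theorem IsPG.closure_eq_setOf (hG : IsPG G) (hI : G.Indep I) :
    G.closure I = {p | p.rep ∈ span F (Projectivization.rep '' I)} :=
  ext fun _ => hG.mem_closure_iff hI

theorem IsPG.span_rep_eq_top (hG : IsPG G) {B : Set (ℙ F V)} (hB : G.IsBase B) :
    span F (Projectivization.rep '' B) = ⊤ := by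
  refine eq_top_iff'.2 fun v => ?_
  rcases eq_or_ne v 0 with rfl | hv
  · exact zero_mem _
  have hp : mk F v hv ∈ G.closure B := by
    rw [hB.closure_eq, hG.1]
    trivial
  obtain ⟨a, ha⟩ := exists_smul_eq_mk_rep F v hv
  rw [hG.mem_closure_iff hB.indep, ← ha] at hp
  exact (smul_mem_iff' _ a).1 hp

theorem IsPG.ncard_eq_finrank (hG : IsPG G) {B : Set (ℙ F V)} (hB : G.IsBase B) :
    B.ncard = finrank F V := by
  let b := Basis.mk (hG.indep_iff.1 hB.indep)
    (by rw [← image_eq_range, hG.span_rep_eq_top hB])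
  rw [finrank_eq_nat_card_basis b, Nat.card_coe_set_eq]

theorem IsPG.finrank_span_rep (hG : IsPG G) (hI : G.Indep I) (hfin : I.Finite) :
    finrank F (span F (Projectivization.rep '' I)) = I.ncard := by
  have := hfin.fintype
  rw [image_eq_range, finrank_span_eq_card (hG.indep_iff.1 hI), ← Nat.card_eq_fintype_card,
    Nat.card_coe_set_eq]

theorem IsPG.ncard_closure [Finite F] (hG : IsPG G) (hI : G.Indep I) (hfin : I.Finite) :
    (G.closure I).ncard = ∑ i ∈ Finset.range I.ncard, Nat.card F ^ i := by
  rw [hG.closure_eq_setOf hI, ncard_setOf_rep_mem, hG.finrank_span_rep hI hfin]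

theorem IsPG.ncard_closure_insert_sdiff_closure [Finite F] [Finite V] (hG : IsPG G)
    {e : ℙ F V} (hI : G.Indep (insert e I)) (he : e ∉ I) (hfin : I.Finite) :
    (G.closure (insert e I) \ G.closure I).ncard = Nat.card F ^ I.ncard := by
  rw [ncard_sdiff (G.closure_subset_closure (subset_insert e I)),
    hG.ncard_closure hI (hfin.insert e), hG.ncard_closure (hI.subset (subset_insert e I)) hfin,
    ncard_insert_of_notMem he hfin, Finset.sum_range_succ, Nat.add_sub_cancel_left]

end ProjectiveGeometry

theorem statement9_general (q t n : ℕ) (F : Type*) [Field F] [Fintype F]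
    (hq : Fintype.card F = q) (htn : t < n - 1)
    (G : Matroid (Projectivization F (Fin n → F))) (hG : IsPG G)
    (B B₀ : Set (Projectivization F (Fin n → F))) (hBase : G.IsBase B)
    (hB₀ : B₀ ⊆ B) (hB₀card : B₀.Finite ∧ B₀.ncard = t) :
    (⋃ e ∈ B \ B₀, G.closure (B₀ ∪ {e})).ncard =
      (n - t) * q ^ t + (q ^ t - 1) / (q - 1) := by
  obtain ⟨hB₀fin, rfl⟩ := hB₀card
  rw [← Nat.card_eq_fintype_card] at hq
  subst hq
  have hsize : (B \ B₀).ncard = n - B₀.ncard := by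
    rw [ncard_sdiff hB₀ hB₀fin, hG.ncard_eq_finrank hBase, Module.finrank_fin_fun]
  have hmeet : (B \ B₀).Pairwise fun e f =>
      G.closure (insert e B₀) ∩ G.closure (insert f B₀) ⊆ G.closure B₀ := fun e he f hf hef =>
    (hBase.indep.subset (insert_subset he.1 (insert_subset hf.1 hB₀))
      |>.closure_insert_inter_closure_insert hef).subset
  have hpetal : ∀ e ∈ B \ B₀,
      (G.closure (insert e B₀) \ G.closure B₀).ncard = Nat.card F ^ B₀.ncard := fun e he =>
    hG.ncard_closure_insert_sdiff_closure (hBase.indep.subset (insert_subset he.1 hB₀)) he.2 hB₀fin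
  simp only [union_singleton]
  rw [ncard_biUnion_of_pairwise_inter_subset (toFinite _) (nonempty_of_ncard_ne_zero (by omega))
      (fun _ _ => toFinite _) (fun e _ => G.closure_subset_closure (subset_insert e B₀))
      hmeet hpetal,
    hG.ncard_closure (hBase.indep.subset hB₀) hB₀fin, hsize, Nat.geomSum_eq Finite.one_lt_card]
  ring

theorem statement9 (q t n : ℕ) (F : Type*) [Field F] [Fintype F]
    (hq : Fintype.card F = q) (ht : 1 ≤ t) (htn : t < n - 1)
    (G : Matroid (Projectivization F (Fin n → F))) (hG : IsPG G)
    (B B₀ : Set (Projectivization F (Fin n → F))) (hBase : G.IsBase B)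
    (hB₀ : B₀ ⊆ B) (hB₀card : B₀.Finite ∧ B₀.ncard = t) :
    (⋃ e ∈ B \ B₀, G.closure (B₀ ∪ {e})).ncard =
      (n - t) * q ^ t + (q ^ t - 1) / (q - 1) :=
  statement9_general q t n F hq htn G hG B B₀ hBase hB₀ hB₀card

end Paper
end

section
/- If q is a prime power, then the affine geometry AG(q − 1, q) has no M(K_{q+1})-minor. -/
open Set Matroid

namespace Paper

variable {α : Type*}

/-!
Let `N ≅ M(K_{q+1})` be a minor of `AG(q - 1, q)`, the restriction of `PG(q - 1, q)` to the
complement of the hyperplane `φ = 0`. A spanning star of `K_{q+1}` has `q` edges, as many as the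
rank, so nothing is contracted and `N` is a restriction. Put on each edge a vector representing it:
the star at a vertex is independent and every triangle is dependent, and this alone yields
potentials `p v` such that every edge vector is a multiple of `p u - p v`, i.e. the representation
is projectively the standard one by `e_u - e_v`. No edge vector lies in the hyperplane, so the
values `φ (p v)` are `q + 1` distinct elements of a field with `q` elements.
-/

section Potential

open Submodule

variable {F W V : Type*} [Field F] [AddCommGroup W] [Module F W]

theorem span_singleton_sub_comm (x y : W) : F ∙ (x - y) = F ∙ (y - x) := by
  rw [← neg_sub, ← Set.neg_singleton, span_neg]

theorem mem_span_pair_of_mem_span_singleton {x y x' y' w : W} (hx : x ∈ F ∙ x')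
    (hy : y ∈ F ∙ y') (hw : w ∈ span F {x, y}) : w ∈ span F {x', y'} :=
  span_le.2 (Set.insert_subset_iff.2 ⟨span_mono (by simp) hx,
    Set.singleton_subset_iff.2 (span_mono (by simp) hy)⟩) hw

/-- The affine planes `axy` and `bxy` are distinct, so the only directions they share are those
of the line `xy`. -/
theorem mem_span_singleton_sub_of_mem_span_pair {a b x y w : W}
    (hab : b - a ∉ span F {x - a, y - a})
    (ha : w ∈ span F {a - x, a - y}) (hb : w ∈ span F {b - x, b - y}) :
    w ∈ F ∙ (x - y) := by
  obtain ⟨c₁, c₂, hc⟩ := mem_span_pair.1 ha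
  obtain ⟨d₁, d₂, hd⟩ := mem_span_pair.1 hb
  have hd₁₂ : d₁ + d₂ = 0 := by
    by_contra hne
    refine hab (mem_span_pair.2 ⟨(d₁ + d₂)⁻¹ * (d₁ - c₁), (d₁ + d₂)⁻¹ * (d₂ - c₂), ?_⟩)
    have key : (d₁ + d₂) • (b - a) = (d₁ - c₁) • (x - a) + (d₂ - c₂) • (y - a) := by
      linear_combination (norm := module) hd - hc
    rw [mul_smul, mul_smul, ← smul_add, ← key, inv_smul_smul₀ hne]
  refine mem_span_singleton.2 ⟨-d₁, ?_⟩
  rw [← hd, show d₂ = -d₁ by linear_combination hd₁₂]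
  module

theorem exists_eq_smul_add_smul_of_mem_span_pair {x y z : W}
    (hxz : LinearIndependent F ![x, z]) (hyz : LinearIndependent F ![y, z])
    (h : z ∈ span F {x, y}) : ∃ a b : F, a ≠ 0 ∧ b ≠ 0 ∧ z = a • x + b • y := by
  obtain ⟨a, b, rfl⟩ := mem_span_pair.1 h
  refine ⟨a, b, fun ha => ?_, fun hb => ?_, rfl⟩
  · simpa using LinearIndependent.pair_iff.1 hyz b (-1) (by simp [ha])
  · simpa using LinearIndependent.pair_iff.1 hxz a (-1) (by simp [hb])

variable (F) in
/-- The properties of a representation of `M(K_V)` by edge vectors `r e` that the argument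
uses; the values of `r` on loops `s(v, v)` play no role. -/
structure IsCliqueRep (r : Sym2 V → W) (o : V) : Prop where
  linearIndependent_star : LinearIndependent F fun v : {v // v ≠ o} => r s(o, v)
  linearIndependent_pair : ∀ {a b c : V}, a ≠ b → a ≠ c → b ≠ c →
    LinearIndependent F ![r s(a, b), r s(a, c)]
  mem_span_pair : ∀ {a b c : V}, a ≠ b → a ≠ c → b ≠ c →
    r s(b, c) ∈ span F {r s(a, b), r s(a, c)}

namespace IsCliqueRep

variable {r : Sym2 V → W} {o : V}

theorem exists_eq_smul_add_smul (hr : IsCliqueRep F r o) {a b c : V} (hab : a ≠ b)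
    (hac : a ≠ c) (hbc : b ≠ c) :
    ∃ α β : F, α ≠ 0 ∧ β ≠ 0 ∧ r s(b, c) = α • r s(a, b) + β • r s(a, c) :=
  exists_eq_smul_add_smul_of_mem_span_pair
    (by simpa [Sym2.eq_swap] using hr.linearIndependent_pair hab.symm hbc hac)
    (by simpa [Sym2.eq_swap] using hr.linearIndependent_pair hac.symm hbc.symm hab)
    (hr.mem_span_pair hab hac hbc)

theorem mem_span_pair_sub (hr : IsCliqueRep F r o) {p : V → W} {a u v : V} (hau : a ≠ u)
    (hav : a ≠ v) (huv : u ≠ v) (hu : r s(a, u) ∈ F ∙ (p a - p u))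
    (hv : r s(a, v) ∈ F ∙ (p a - p v)) : r s(u, v) ∈ span F {p a - p u, p a - p v} :=
  mem_span_pair_of_mem_span_singleton hu hv (hr.mem_span_pair hau hav huv)

theorem notMem_span_smul_pair (hr : IsCliqueRep F r o) {i u v : V} (hio : i ≠ o) (huo : u ≠ o)
    (hvo : v ≠ o) (hui : u ≠ i) (hvi : v ≠ i) (a b : F) :
    r s(o, i) ∉ span F {a • r s(o, u), b • r s(o, v)} := by
  have h := hr.linearIndependent_star.notMem_span_image (x := ⟨i, hio⟩)
    (s := {⟨u, huo⟩, ⟨v, hvo⟩}) (by simp [Subtype.ext_iff, hui.symm, hvi.symm])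
  rw [Set.image_pair] at h
  exact fun hmem => h (mem_span_pair_of_mem_span_singleton
    (smul_mem _ _ (mem_span_singleton_self _)) (smul_mem _ _ (mem_span_singleton_self _)) hmem)

theorem exists_potential_of_ne (hr : IsCliqueRep F r o) {i : V} (hio : i ≠ o) :
    ∃ p : V → W, ∀ u v, u ≠ v → r s(u, v) ∈ F ∙ (p u - p v) := by
  classical
  choose! α β hα hβ hαβ using fun v (hvo : v ≠ o) (hvi : v ≠ i) =>
    hr.exists_eq_smul_add_smul hvo hvi hio.symm
  -- `p o = 0` and `p i = r s(o, i)` fix the normalisation; the triangle `o i v` then forces `p v`.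
  set p : V → W := fun v => if v = o then 0 else if v = i then r s(o, i) else α v • r s(o, v)
  have hpo : p o = 0 := if_pos rfl
  have hpi : p i = r s(o, i) := by simp [p, hio]
  have hpv : ∀ v, v ≠ o → v ≠ i → p v = α v • r s(o, v) := by
    intro v hvo hvi
    simp [p, hvo, hvi]
  have ho : ∀ v, v ≠ o → r s(o, v) ∈ F ∙ (p o - p v) := by
    intro v hvo
    refine mem_span_singleton.2 ?_
    obtain rfl | hvi := eq_or_ne v i
    · exact ⟨-1, by rw [hpo, hpi]; module⟩
    · refine ⟨-(α v)⁻¹, ?_⟩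
      rw [hpo, hpv v hvo hvi, zero_sub, smul_neg, neg_smul, neg_neg, inv_smul_smul₀ (hα v hvo hvi)]
  have hi : ∀ v, v ≠ o → v ≠ i → r s(i, v) ∈ F ∙ (p i - p v) := by
    intro v hvo hvi
    refine mem_span_singleton.2 ⟨(β v)⁻¹, ?_⟩
    rw [hpi, hpv v hvo hvi, hαβ v hvo hvi, Sym2.eq_swap (a := v), add_sub_cancel_left,
      Sym2.eq_swap, inv_smul_smul₀ (hβ v hvo hvi)]
  have hother : ∀ u v, u ≠ v → u ≠ o → u ≠ i → v ≠ o → v ≠ i →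
      r s(u, v) ∈ F ∙ (p u - p v) := by
    intro u v huv huo hui hvo hvi
    refine mem_span_singleton_sub_of_mem_span_pair ?_
      (hr.mem_span_pair_sub huo.symm hvo.symm huv (ho u huo) (ho v hvo))
      (hr.mem_span_pair_sub hui.symm hvi.symm huv (hi u huo hui) (hi v hvo hvi))
    rw [hpo, hpi, hpv u huo hui, hpv v hvo hvi, sub_zero, sub_zero, sub_zero]
    exact hr.notMem_span_smul_pair hio huo hvo hui hvi _ _
  refine ⟨p, fun u v huv => ?_⟩
  obtain rfl | huo := eq_or_ne u o
  · exact ho v huv.symm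
  obtain rfl | hvo := eq_or_ne v o
  · rw [Sym2.eq_swap, span_singleton_sub_comm]
    exact ho u huo
  obtain rfl | hui := eq_or_ne u i
  · exact hi v hvo huv.symm
  obtain rfl | hvi := eq_or_ne v i
  · rw [Sym2.eq_swap, span_singleton_sub_comm]
    exact hi u huo hui
  exact hother u v huv huo hui hvo hvi

theorem exists_potential (hr : IsCliqueRep F r o) :
    ∃ p : V → W, ∀ u v, u ≠ v → r s(u, v) ∈ F ∙ (p u - p v) := by
  by_cases h : ∃ i, i ≠ o
  · exact hr.exists_potential_of_ne h.choose_spec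
  push Not at h
  exact ⟨0, fun u v huv => absurd ((h u).trans (h v).symm) huv⟩

end IsCliqueRep

theorem injective_comp_of_forall_mem_span_singleton (φ : W →ₗ[F] F) {r : Sym2 V → W} {p : V → W}
    (hp : ∀ u v, u ≠ v → r s(u, v) ∈ F ∙ (p u - p v)) (hφ : ∀ u v, u ≠ v → φ (r s(u, v)) ≠ 0) :
    Function.Injective (φ ∘ p) := by
  intro u v huv
  by_contra hne
  obtain ⟨c, hc⟩ := mem_span_singleton.1 (hp u v hne)
  apply hφ u v hne
  rw [← hc, map_smul, map_sub]
  exact smul_eq_zero_of_right c (sub_eq_zero.2 huv)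

end Potential

section Graph

variable {V : Type*}

theorem graphicCircuit_triangle {a b c : V} (hab : a ≠ b) (hac : a ≠ c) (hbc : b ≠ c) :
    GraphicCircuit (SimpleGraph.completeGraph V) {s(b, c), s(a, b), s(a, c)} := by
  refine ⟨a, .cons hab (.cons hbc (.cons hac.symm .nil)), ?_, ?_⟩
  · simp [SimpleGraph.Walk.cons_isCycle_iff, Sym2.eq_swap, hab, hac, hbc, hab.symm, hac.symm]
  · ext e
    simp only [mem_insert_iff, mem_singleton_iff, mem_ofPred_eq, SimpleGraph.Walk.edges_cons,
      SimpleGraph.Walk.edges_nil, List.mem_cons, List.not_mem_nil, or_false,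
      Sym2.eq_swap (a := c) (b := a)]
    tauto

theorem not_graphicCircuit_of_forall_mem {G : SimpleGraph V} {C : Set (Sym2 V)} (o : V)
    (hC : ∀ e ∈ C, o ∈ e) : ¬ GraphicCircuit G C := by
  rintro ⟨v, w, hw, rfl⟩
  obtain ⟨e, he⟩ := List.exists_mem_of_length_pos
    (by rw [w.length_edges]; linarith [hw.three_le_length] : 0 < w.edges.length)
  obtain ⟨u, rfl⟩ := Sym2.mem_iff_exists.1 (hC e he)
  have huo : u ≠ o := (w.adj_of_mem_edges he).ne.symm
  have hnbr : w.toSubgraph.neighborSet u ⊆ {o} := by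
    intro y hy
    have hmem := hC _ (w.adj_toSubgraph_iff_mem_edges.1 hy)
    rw [Sym2.mem_iff] at hmem
    exact hmem.resolve_left huo.symm |>.symm
  have h2 := hw.ncard_neighborSet_toSubgraph_eq_two (w.snd_mem_support_of_mem_edges he)
  have := Set.ncard_le_ncard hnbr
  rw [h2, Set.ncard_singleton] at this
  omega

end Graph

section Graphic

theorem IsMinor.ground_subset {N M : Matroid α} (h : IsMinor N M) : N.E ⊆ M.E :=
  let ⟨_, _, _, _, hE, _⟩ := h
  hE.trans sdiff_subset

theorem isCircuit_of_matroid_isCircuit {M : Matroid α} {C : Set α} (hC : M.IsCircuit C) :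
    IsCircuit M C :=
  Set.minimal_iff_forall_ssubset.1 hC

variable {V : Type*} {N : Matroid α} {f : α → Sym2 V} [Nonempty α]

theorem invFunOn_mem_ground (hf : f '' N.E = (SimpleGraph.completeGraph V).edgeSet) {a b : V}
    (hab : a ≠ b) : Function.invFunOn f N.E s(a, b) ∈ N.E :=
  Function.invFunOn_mem (show s(a, b) ∈ f '' N.E by rw [hf]; exact hab)

theorem apply_invFunOn (hf : f '' N.E = (SimpleGraph.completeGraph V).edgeSet) {a b : V}
    (hab : a ≠ b) : f (Function.invFunOn f N.E s(a, b)) = s(a, b) :=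
  Function.invFunOn_eq (show s(a, b) ∈ f '' N.E by rw [hf]; exact hab)

theorem isCircuit_invFunOn_triangle (hf : f '' N.E = (SimpleGraph.completeGraph V).edgeSet)
    (hcirc : ∀ C ⊆ N.E, IsCircuit N C ↔ GraphicCircuit (SimpleGraph.completeGraph V) (f '' C))
    {a b c : V} (hab : a ≠ b) (hac : a ≠ c) (hbc : b ≠ c) :
    IsCircuit N {Function.invFunOn f N.E s(b, c), Function.invFunOn f N.E s(a, b),
      Function.invFunOn f N.E s(a, c)} := by
  rw [hcirc _ (by simp [insert_subset_iff, invFunOn_mem_ground hf, *]), image_insert_eq,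
    image_pair, apply_invFunOn hf hab, apply_invFunOn hf hac, apply_invFunOn hf hbc]
  exact graphicCircuit_triangle hab hac hbc

theorem indep_invFunOn_star (hf : f '' N.E = (SimpleGraph.completeGraph V).edgeSet)
    (hcirc : ∀ C ⊆ N.E, IsCircuit N C ↔ GraphicCircuit (SimpleGraph.completeGraph V) (f '' C))
    (o : V) :
    N.Indep (range fun v : {v // v ≠ o} => Function.invFunOn f N.E s(o, v)) := by
  have hsub : (range fun v : {v // v ≠ o} => Function.invFunOn f N.E s(o, v)) ⊆ N.E := by
    rintro - ⟨v, rfl⟩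
    exact invFunOn_mem_ground hf v.2.symm
  rw [← not_dep_iff hsub]
  intro hdep
  obtain ⟨C, hCS, hC⟩ := hdep.exists_isCircuit_subset
  refine not_graphicCircuit_of_forall_mem o ?_
    ((hcirc C (hCS.trans hsub)).1 (isCircuit_of_matroid_isCircuit hC))
  rintro - ⟨z, hz, rfl⟩
  obtain ⟨v, rfl⟩ := hCS hz
  simp [apply_invFunOn hf v.2.symm]

end Graphic

section ProjectiveGeometry

open Projectivization Module Submodule
open scoped LinearAlgebra.Projectivization

variable {F W : Type*} [Field F] [AddCommGroup W] [Module F W] {G : Matroid (ℙ F W)}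

theorem IsPG.indep_range_iff (hG : IsPG G) {ι : Type*} {y : ι → ℙ F W}
    (hy : Function.Injective y) : G.Indep (range y) ↔ LinearIndependent F fun i => (y i).rep := by
  rw [hG.2, independent_iff, ← linearIndependent_equiv (Equiv.ofInjective y hy)]
  rfl

theorem IsPG.finite_of_indep [FiniteDimensional F W] (hG : IsPG G) {X : Set (ℙ F W)}
    (hX : G.Indep X) : X.Finite :=
  have := (independent_iff.1 ((hG.2 X).1 hX)).finite
  X.toFinite

theorem IsPG.ncard_le_finrank [FiniteDimensional F W] (hG : IsPG G) {X : Set (ℙ F W)}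
    (hX : G.Indep X) : X.ncard ≤ finrank F W := by
  have := (hG.finite_of_indep hX).fintype
  rw [ncard_eq_toFinset_card', toFinset_card]
  exact (independent_iff.1 ((hG.2 X).1 hX)).fintype_card_le_finrank

theorem IsPG.rep_mem_span_of_not_indep (hG : IsPG G) {x y z : ℙ F W} (hxy : x ≠ y)
    (hzx : z ≠ x) (hzy : z ≠ y) (h : ¬ G.Indep {z, x, y}) : z.rep ∈ span F {x.rep, y.rep} := by
  have hinj : Function.Injective ![z, x, y] := by
    rw [Matrix.vecCons, Fin.cons_injective_iff, Matrix.vecCons, Fin.cons_injective_iff]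
    simp [hxy, hzx, hzy, Function.injective_of_subsingleton]
  rw [show {z, x, y} = range ![z, x, y] by
    rw [Matrix.range_cons, Matrix.range_cons_cons_empty]; rfl, hG.indep_range_iff hinj] at h
  have h' : ¬ LinearIndependent F (Fin.cons z.rep ![x.rep, y.rep] : Fin 3 → W) := by
    convert h using 2
    funext i; fin_cases i <;> rfl
  rw [linearIndependent_finCons, not_and, not_not] at h'
  simpa only [Matrix.range_cons_cons_empty] using h' (linearIndependent_pair_iff_ne.2 hxy)

theorem IsPG.indep_iff_of_isMinor [FiniteDimensional F W] (hG : IsPG G) {A : Set (ℙ F W)}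
    {N : Matroid (ℙ F W)} (hN : IsMinor N (G ↾ A)) {S : Set (ℙ F W)} (hSN : S ⊆ N.E)
    (hS : N.Indep S) (hcard : S.ncard = finrank F W) {X : Set (ℙ F W)} (hX : X ⊆ N.E) :
    N.Indep X ↔ G.Indep X := by
  obtain ⟨C, I, -, hIC, hNE, hNI⟩ := hN
  have hSI : G.Indep (S ∪ I) := (restrict_indep_iff.1 ((hNI S hSN).1 hS)).1
  have hI : I = ∅ := by
    have hdisj : Disjoint S I :=
      disjoint_left.2 fun z hzS hzI => (hNE (hSN hzS)).2 (hIC.subset hzI)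
    have hfin := hG.finite_of_indep hSI
    have hle := hG.ncard_le_finrank hSI
    rw [ncard_union_eq hdisj (hfin.subset subset_union_left) (hfin.subset subset_union_right),
      hcard] at hle
    exact (ncard_eq_zero (hfin.subset subset_union_right)).1 (by omega)
  rw [hNI X hX, hI, union_empty, restrict_indep_iff]
  exact and_iff_left (hX.trans (hNE.trans sdiff_subset))

theorem IsPG.exists_isCliqueRep [FiniteDimensional F W] [Nontrivial W] (hG : IsPG G)
    {A : Set (ℙ F W)} {n : ℕ} (hn : finrank F W = n) (h : HasCliqueMinor (G ↾ A) (n + 1)) :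
    ∃ x : Sym2 (Fin (n + 1)) → ℙ F W,
      (∀ a b, a ≠ b → x s(a, b) ∈ A) ∧ IsCliqueRep F (fun e => (x e).rep) 0 := by
  obtain ⟨N, hminor, f, -, hf, hcirc⟩ := h
  set x := Function.invFunOn f N.E
  have hxN : ∀ {a b}, a ≠ b → x s(a, b) ∈ N.E := invFunOn_mem_ground hf
  have hxne : ∀ {a b c d}, a ≠ b → c ≠ d → s(a, b) ≠ s(c, d) → x s(a, b) ≠ x s(c, d) :=
    fun hab hcd hne h => hne (by
      rw [← apply_invFunOn hf hab, ← apply_invFunOn hf hcd]; exact congrArg f h)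
  have hstar_inj : Function.Injective fun v : {v : Fin (n + 1) // v ≠ 0} => x s(0, v) := by
    intro v w h
    by_contra hvw
    exact hxne v.2.symm w.2.symm (fun h' => hvw (Subtype.ext (Sym2.congr_right.1 h'))) h
  have hstar_sub : (range fun v : {v : Fin (n + 1) // v ≠ 0} => x s(0, v)) ⊆ N.E := by
    rintro - ⟨v, rfl⟩
    exact hxN v.2.symm
  have hstar := indep_invFunOn_star hf hcirc 0
  have hindep : ∀ {X}, X ⊆ N.E → (N.Indep X ↔ G.Indep X) :=
    hG.indep_iff_of_isMinor hminor hstar_sub hstar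
      (by rw [ncard_range_of_injective hstar_inj]; simp [hn])
  refine ⟨x, fun a b hab => hminor.ground_subset (hxN hab), ⟨?_, ?_, ?_⟩⟩
  · exact (hG.indep_range_iff hstar_inj).1 ((hindep hstar_sub).1 hstar)
  · intro a b c hab hac hbc
    exact linearIndependent_pair_iff_ne.2 (hxne hab hac (mt Sym2.congr_right.1 hbc))
  · intro a b c hab hac hbc
    refine hG.rep_mem_span_of_not_indep (hxne hab hac (mt Sym2.congr_right.1 hbc))
      (hxne hbc hab (by rw [Ne, Sym2.eq_iff]; omega))
      (hxne hbc hac (by rw [Ne, Sym2.eq_iff]; omega))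
      fun hind => (isCircuit_invFunOn_triangle hf hcirc hab hac hbc).1.not_indep ?_
    refine (hindep ?_).2 hind
    simp only [insert_subset_iff, singleton_subset_iff]
    exact ⟨hxN hbc, hxN hab, hxN hac⟩

end ProjectiveGeometry

theorem statement11_general (q : ℕ) (F : Type*) [Field F] [Fintype F]
    (hq : Fintype.card F = q)
    (G : Matroid (Projectivization F (Fin q → F))) (hG : IsPG G)
    (φ : (Fin q → F) →ₗ[F] F) :
    ¬ HasCliqueMinor (G ↾ {x | φ x.rep ≠ 0}) (q + 1) := by
  intro h
  have : Nontrivial (Fin q → F) := Module.nontrivial_of_finrank_pos (R := F)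
    (by rw [Module.finrank_fin_fun, ← hq]; exact Fintype.card_pos)
  obtain ⟨x, hxA, hx⟩ := hG.exists_isCliqueRep (Module.finrank_fin_fun F) h
  obtain ⟨p, hp⟩ := hx.exists_potential
  have hinj := injective_comp_of_forall_mem_span_singleton φ (r := fun e => (x e).rep) hp hxA
  have := Fintype.card_le_of_injective _ hinj
  rw [Fintype.card_fin, hq] at this
  omega

theorem statement11 (q : ℕ) (F : Type*) [Field F] [Fintype F]
    (hq : Fintype.card F = q)
    (G : Matroid (Projectivization F (Fin q → F))) (hG : IsPG G)
    (φ : (Fin q → F) →ₗ[F] F) (hφ : φ ≠ 0) :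
    ¬ HasCliqueMinor (G ↾ {x | φ x.rep ≠ 0}) (q + 1) :=
  statement11_general q F hq G hG φ

end Paper
end

section
/- Let n ∈ ℕ and T = (e_X : X ∈ S(n)) be an n-tower in a matroid M. Then the restriction M|E(T) has rank n, and the set of joints {e_1, ..., e_n} is a basis of M|E(T). -/
open Set Matroid

namespace Paper

variable {α : Type*}

/-!
Induction on `n`. In an `(n+1)`-tower the top joint `c = e {n+1}` is a nonloop: contracting
a loop is deleting it, which cannot create parallel pairs, contradicting condition (2). By
induction, applied to condition (3), the joints `e {1}, …, e {n}` form a basis of the lower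
tower in `M ／ c`; by condition (1) each upper element `e (X ∪ {n+1})` is parallel in `M ／ c`
to `e X`, so it is spanned as well. Adding `c` back turns this basis of `M ／ c` into a basis
of the whole tower in `M`.
-/

lemma _root_.Finset.exists_nonempty_subset_insert_iff {β : Type*} [DecidableEq β]
    {p : Finset β → Prop} (a : β) (t : Finset β) :
    (∃ X : Finset β, X.Nonempty ∧ X ⊆ insert a t ∧ p X) ↔
      (∃ X : Finset β, X.Nonempty ∧ X ⊆ t ∧ p X) ∨
        (∃ Y : Finset β, Y.Nonempty ∧ Y ⊆ t ∧ p (insert a Y)) ∨ p {a} := by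
  constructor
  · rintro ⟨X, hX, hXt, hp⟩
    rw [Finset.subset_insert_iff] at hXt
    by_cases ha : a ∈ X
    · rcases (X.erase a).eq_empty_or_nonempty with hY | hY
      · obtain rfl : X = {a} := ((X.erase_eq_empty_iff a).1 hY).resolve_left hX.ne_empty
        exact Or.inr (Or.inr hp)
      · exact Or.inr (Or.inl ⟨X.erase a, hY, hXt, by rwa [Finset.insert_erase ha]⟩)
    · exact Or.inl ⟨X, hX, by rwa [Finset.erase_eq_of_notMem ha] at hXt, hp⟩
  · rintro (⟨X, hX, hXt, hp⟩ | ⟨Y, -, hYt, hp⟩ | hp)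
    · exact ⟨X, hX, hXt.trans (Finset.subset_insert a t), hp⟩
    · exact ⟨insert a Y, Finset.insert_nonempty a Y, Finset.insert_subset_insert a hYt, hp⟩
    · exact ⟨{a}, Finset.singleton_nonempty a, by simp, hp⟩

variable {M : Matroid α} {a b c : α}

lemma contract_eq (M : Matroid α) (C : Set α) : contract M C = M ／ C := rfl

lemma Para.mem_closure_of_mem {X : Set α} (h : Para M a b) (ha : a ∈ M.closure X) :
    b ∈ M.closure X :=
  M.closure_subset_closure_of_subset_closure (singleton_subset_iff.2 ha) h.2.2

lemma Para.of_delete {D : Set α} (h : Para (M ＼ D) a b) : Para M a b := by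
  obtain ⟨ha, hb, hab⟩ := h
  rw [delete_closure_eq] at hab
  exact ⟨ha.of_delete, hb.of_delete, M.closure_subset_closure sdiff_subset hab.1⟩

lemma Para.of_contract_of_not_indep (hc : ¬ M.Indep {c}) (h : Para (M ／ {c}) a b) :
    Para M a b := by
  by_cases hcE : c ∈ M.E
  · have hloop : {c} ⊆ M.loops := singleton_subset_iff.2 <| by
      rwa [indep_singleton, ← not_isLoop_iff, not_not] at hc
    rw [contract_eq_delete_of_subset_loops hloop] at h
    exact h.of_delete
  · rwa [contractElem_eq_self hcE] at h

lemma rk_eq_of_isBase {B : Set α} {n : ℕ} (hB : M.IsBase B) (hBn : B.encard = n) : rk M = n := by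
  refine IsGreatest.csSup_eq ⟨⟨B, hB.indep, by rw [ncard_def, hBn]; rfl⟩, ?_⟩
  rintro _ ⟨I, hI, rfl⟩
  have hIn : I.encard ≤ n := hBn ▸ hB.encard_eq_eRank ▸ hI.encard_le_eRank
  exact (encard_le_coe_iff_finite_ncard_le.1 hIn).2

def towerSet (n : ℕ) (e : Finset ℕ → α) : Set α :=
  {a | ∃ X : Finset ℕ, X.Nonempty ∧ X ⊆ Finset.Icc 1 n ∧ a = e X}

def joints (n : ℕ) (e : Finset ℕ → α) : Set α :=
  {a | ∃ i ∈ Finset.Icc 1 n, a = e {i}}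

lemma towerSet_zero (e : Finset ℕ → α) : towerSet 0 e = ∅ := by
  simp [towerSet, Finset.subset_empty, Finset.nonempty_iff_ne_empty]

lemma joints_zero (e : Finset ℕ → α) : joints 0 e = ∅ := by
  simp [joints]

lemma towerSet_succ (m : ℕ) (e : Finset ℕ → α) :
    towerSet (m + 1) e =
      towerSet m e ∪ towerSet m (fun X => e (insert (m + 1) X)) ∪ {e {m + 1}} := by
  ext a
  simp only [towerSet, mem_union, mem_ofPred_eq, mem_singleton_iff,
    ← Finset.insert_Icc_right_eq_Icc_add_one (show 1 ≤ m + 1 by omega),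
    Finset.exists_nonempty_subset_insert_iff, or_assoc]

lemma joints_succ (m : ℕ) (e : Finset ℕ → α) :
    joints (m + 1) e = joints m e ∪ {e {m + 1}} := by
  ext a
  simp only [joints, mem_union, mem_ofPred_eq, mem_singleton_iff,
    ← Finset.insert_Icc_right_eq_Icc_add_one (show 1 ≤ m + 1 by omega), Finset.mem_insert,
    or_and_right, exists_or, exists_eq_left]
  exact or_comm

theorem IsTower.isBasis_joints :
    ∀ {n : ℕ} {M : Matroid α} {e : Finset ℕ → α}, IsTower M n e →
      M.IsBasis (joints n e) (towerSet n e) ∧ (joints n e).encard = n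
  | 0, _, _, hT => hT.elim
  | 1, M, e, hT => by
    have hI : M.Indep {e {1}} := hT
    simpa [towerSet_succ 0, joints_succ 0, towerSet_zero, joints_zero] using hI.isBasis_self
  | n + 2, M, e, hT => by
    obtain ⟨hpara, ⟨X, hX, hXn, hXpara⟩, -, hTc, -, -⟩ := hT
    rw [contract_eq] at hpara hTc
    have hc : M.Indep {e {n + 2}} := by
      by_contra hc
      exact hXpara (hpara X hX hXn |>.of_contract_of_not_indep hc)
    obtain ⟨hB, hcard⟩ := IsTower.isBasis_joints hTc
    have hupper : towerSet (n + 1) (fun X => e (insert (n + 2) X)) ⊆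
        (M ／ {e {n + 2}}).closure (joints (n + 1) e) := by
      rintro _ ⟨Y, hY, hYn, rfl⟩
      exact (hpara Y hY hYn).mem_closure_of_mem (hB.subset_closure ⟨Y, hY, hYn, rfl⟩)
    have hB' := hc.union_isBasis_union_of_contract_isBasis <|
      hB.indep.isBasis_of_subset_of_subset_closure (hB.subset.trans subset_union_left)
        (union_subset hB.subset_closure hupper)
    have hcJ : e {n + 2} ∉ joints (n + 1) e := fun h => (hB.indep.subset_ground h).2 rfl
    refine ⟨by rwa [towerSet_succ, joints_succ], ?_⟩
    rw [joints_succ, encard_union_eq (disjoint_singleton_right.2 hcJ), hcard, encard_singleton]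
    rfl

theorem statement15_general {α : Type*} (n : ℕ) (M : Matroid α)
    (e : Finset ℕ → α) (hT : IsTower M n e) :
    rk (M ↾ {a | ∃ X : Finset ℕ, X.Nonempty ∧ X ⊆ Finset.Icc 1 n ∧ a = e X}) = n ∧
      (M ↾ {a | ∃ X : Finset ℕ, X.Nonempty ∧ X ⊆ Finset.Icc 1 n ∧ a = e X}).IsBase
        {a | ∃ i ∈ Finset.Icc 1 n, a = e {i}} := by
  obtain ⟨hB, hcard⟩ := hT.isBasis_joints
  exact ⟨rk_eq_of_isBase hB.restrict_isBase hcard, hB.restrict_isBase⟩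

theorem statement15 {α : Type*} (n : ℕ) (hn : 1 ≤ n) (M : Matroid α)
    (e : Finset ℕ → α) (hT : IsTower M n e) :
    rk (M ↾ {a | ∃ X : Finset ℕ, X.Nonempty ∧ X ⊆ Finset.Icc 1 n ∧ a = e X}) = n ∧
      (M ↾ {a | ∃ X : Finset ℕ, X.Nonempty ∧ X ⊆ Finset.Icc 1 n ∧ a = e X}).IsBase
        {a | ∃ i ∈ Finset.Icc 1 n, a = e {i}} :=
  statement15_general n M e hT

end Paper
end
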